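/- Suppose B and C are √q_n-crystals. Then the √gl_n-crystal B ⊗ C, equipped additionally with the operators e'_1̄(b ⊗ c) = b ⊗ e'_1̄(c) if wt(b)_1 = wt(b)_2 = 0 and e'_1̄(b) ⊗ c otherwise, and f'_1̄(b ⊗ c) = b ⊗ f'_1̄(c) if wt(b)_1 = wt(b)_2 = 0 and f'_1̄(b) ⊗ c otherwise (with b ⊗ 0 = 0 ⊗ c = 0), is a √q_n-crystal. -/

import Mathlib

open scoped Classical

/-! ## Shifted diagrams, hook words, decomposition tableaux -/

/-- A strict partition, given as its (strictly decreasing) list of positive parts. -/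
def IsStrictPartition (lam : List ℕ) : Prop :=
  lam.Chain' (· > ·) ∧ ∀ p ∈ lam, 0 < p

/-- A partition (weakly decreasing list of positive parts). -/
def IsPartition (lam : List ℕ) : Prop :=
  lam.Chain' (· ≥ ·) ∧ ∀ p ∈ lam, 0 < p

/-- `(i, j)` (1-indexed row `i`, column `j`) is a box of the shifted diagram `SD_lam`. -/
def InSD (lam : List ℕ) (i j : ℕ) : Prop :=
  1 ≤ i ∧ i ≤ lam.length ∧ i ≤ j ∧ j < i + lam.getD (i - 1) 0

/-- `(i, j)` is a box of the (unshifted) Young diagram of `lam`. -/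
def InYD (lam : List ℕ) (i j : ℕ) : Prop :=
  1 ≤ i ∧ i ≤ lam.length ∧ 1 ≤ j ∧ j ≤ lam.getD (i - 1) 0

/-- The word given by row `i` (1-indexed) of a shifted tableau `T`, read left to right. -/
def rowWord (lam : List ℕ) (T : ℕ × ℕ → ℕ) (i : ℕ) : List ℕ :=
  (List.range (lam.getD (i - 1) 0)).map fun j => T (i, i + j)

/-- A hook word: a sequence of positive integers `w₁ ≥ ⋯ ≥ w_m < w_{m+1} < ⋯ < w_n`
for some `m ∈ [n]`. -/
def IsHookWord (w : List ℕ) : Prop :=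
  (∀ v ∈ w, 0 < v) ∧
  ∃ m, 1 ≤ m ∧ m ≤ w.length ∧
    (∀ j : ℕ, j + 1 < m → w.getD (j + 1) 0 ≤ w.getD j 0) ∧
    (∀ j : ℕ, m ≤ j + 1 → j + 1 < w.length → w.getD j 0 < w.getD (j + 1) 0)

/-- `r` is a hook subword of maximal length in `s`. -/
def IsMaxHookSubwordIn (r s : List ℕ) : Prop :=
  r.Sublist s ∧ IsHookWord r ∧
    ∀ t : List ℕ, t.Sublist s → IsHookWord t → t.length ≤ r.length

/-- A (semistandard) decomposition tableau of shifted shape `lam`. -/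
def IsDecompTab (lam : List ℕ) (T : ℕ × ℕ → ℕ) : Prop :=
  (∀ i, 1 ≤ i → i ≤ lam.length → IsHookWord (rowWord lam T i)) ∧
  (∀ i, 1 ≤ i → i + 1 ≤ lam.length →
    IsMaxHookSubwordIn (rowWord lam T i) (rowWord lam T (i + 1) ++ rowWord lam T i))

/-! ## Set-valued decomposition tableaux -/

/-- A set-valued decomposition tableau: boxes of `SD_lam` are filled by finite nonempty
sets of positive integers, all of whose distributions are decomposition tableaux. -/
def IsSetDecompTab (lam : List ℕ) (T : ℕ × ℕ → Finset ℕ) : Prop :=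
  (∀ i j, InSD lam i j → (T (i, j)).Nonempty ∧ 0 ∉ T (i, j)) ∧
  (∀ d : ℕ × ℕ → ℕ, (∀ i j, InSD lam i j → d (i, j) ∈ T (i, j)) → IsDecompTab lam d)

/-- Set-valued decomposition tableau whose every entry is contained in `{1, …, n}`. -/
def IsSetDecompTabN (n : ℕ) (lam : List ℕ) (T : ℕ × ℕ → Finset ℕ) : Prop :=
  IsSetDecompTab lam T ∧ ∀ i j, InSD lam i j → ∀ v ∈ T (i, j), v ≤ n

/-! ## Reverse row reading words -/

/-- The boxes of `SD_lam` in reverse row reading order: the first row read right to left,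
then the second row right to left, and so on. -/
def revrowBoxes (lam : List ℕ) : List (ℕ × ℕ) :=
  (List.range lam.length).flatMap fun r =>
    (List.range (lam.getD r 0)).reverse.map fun j => (r + 1, r + 1 + j)

/-- Position of a box in the reverse row reading order. -/
def boxIdx (lam : List ℕ) (b : ℕ × ℕ) : ℕ := (revrowBoxes lam).idxOf b

/-- The reverse row reading word of a set-valued tableau, with each letter labelled by
its box: entries within each box are listed in decreasing order. -/
def revrowEntries (lam : List ℕ) (T : ℕ × ℕ → Finset ℕ) : List ((ℕ × ℕ) × ℕ) :=
  (revrowBoxes lam).flatMap fun b => (((T b).sort (· ≤ ·)).reverse).map fun v => (b, v)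

/-- The reverse row reading word of a set-valued tableau. -/
def revrowWord (lam : List ℕ) (T : ℕ × ℕ → Finset ℕ) : List ℕ :=
  (revrowEntries lam T).map Prod.snd

/-- `wtSet lam T k` is the number of boxes of `T` whose entry contains `k`. -/
noncomputable def wtSet (lam : List ℕ) (T : ℕ × ℕ → Finset ℕ) (k : ℕ) : ℕ :=
  ((revrowBoxes lam).filter fun b => decide (k ∈ T b)).length

/-- `wtNum lam T k` is the number of boxes of an ordinary tableau `T` equal to `k`. -/
noncomputable def wtNum (lam : List ℕ) (T : ℕ × ℕ → ℕ) (k : ℕ) : ℕ :=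
  ((revrowBoxes lam).filter fun b => decide (T b = k)).length

/-! ## Parenthesis pairing: `i`-unpaired letters -/

/-- Number of unmatched `i+1`'s ( "(" ) after scanning `u` left to right,
where each `i` ( ")" ) cancels the most recent unmatched `i+1`. -/
def openCount (i : ℕ) (u : List ℕ) : ℕ :=
  u.foldl (fun acc a => if a = i + 1 then acc + 1 else if a = i then acc - 1 else acc) 0

/-- Number of unmatched `i`'s ( ")" ) after scanning `u` right to left,
where each `i+1` ( "(" ) cancels the nearest unmatched `i` to its right. -/
def closeCount (i : ℕ) (u : List ℕ) : ℕ :=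
  u.foldr (fun a acc => if a = i then acc + 1 else if a = i + 1 then acc - 1 else acc) 0

/-- Position `p` of `w` holds an `i`-unpaired letter equal to `i+1`. -/
def UnpairedHigh (i : ℕ) (w : List ℕ) (p : ℕ) : Prop :=
  p < w.length ∧ w.getD p 0 = i + 1 ∧ closeCount i (w.drop (p + 1)) = 0

/-- Position `p` of `w` holds an `i`-unpaired letter equal to `i`. -/
def UnpairedLow (i : ℕ) (w : List ℕ) (p : ℕ) : Prop :=
  p < w.length ∧ w.getD p 0 = i ∧ openCount i (w.take p) = 0

instance (i : ℕ) (w : List ℕ) (p : ℕ) : Decidable (UnpairedHigh i w p) := by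
  unfold UnpairedHigh; infer_instance

instance (i : ℕ) (w : List ℕ) (p : ℕ) : Decidable (UnpairedLow i w p) := by
  unfold UnpairedLow; infer_instance

/-- The number of `i`-unpaired letters equal to `i+1` in `w`. -/
def numUnpairedHigh (i : ℕ) (w : List ℕ) : ℕ :=
  ((List.range w.length).filter fun p => decide (UnpairedHigh i w p)).length

/-- The number of `i`-unpaired letters equal to `i` in `w`. -/
def numUnpairedLow (i : ℕ) (w : List ℕ) : ℕ :=
  ((List.range w.length).filter fun p => decide (UnpairedLow i w p)).length

/-! ## Iterated partial operators and string lengths -/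

/-- Iterate a partial operator, with the convention that `0` (i.e. `none`) is absorbing. -/
def iterOpt {α : Type*} (g : α → Option α) : ℕ → α → Option α
  | 0, a => some a
  | k + 1, a => (g a).bind (iterOpt g k)

/-- `m` is the exact string length `sup {k | g^k a ≠ 0}` of `a` under `g`. -/
def HasStringLen {α : Type*} (g : α → Option α) (a : α) (m : ℕ) : Prop :=
  iterOpt g m a ≠ none ∧ iterOpt g (m + 1) a = none

/-! ## The queer crystal operators on set-valued decomposition tableaux -/

/-- The raising crystal operator `e_i` on set-valued decomposition tableaux. -/
noncomputable def eCrystal (lam : List ℕ) (i : ℕ) (T : ℕ × ℕ → Finset ℕ) :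
    Option (ℕ × ℕ → Finset ℕ) :=
  if h : ∃ p, UnpairedHigh i (revrowWord lam T) p then
    let xy := ((revrowEntries lam T).getD (Nat.find h) ((0, 0), 0)).1
    let T1 := Function.update T xy (insert i ((T xy).erase (i + 1)))
    if IsSetDecompTab lam T1 then some T1
    else if _hab : ∃ m, m < boxIdx lam xy ∧ i ∈ T ((revrowBoxes lam).getD m (0, 0)) ∧
        i + 1 ∈ T ((revrowBoxes lam).getD m (0, 0)) then
      let m := Nat.findGreatest (fun m => m < boxIdx lam xy ∧
          i ∈ T ((revrowBoxes lam).getD m (0, 0)) ∧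
          i + 1 ∈ T ((revrowBoxes lam).getD m (0, 0))) (boxIdx lam xy)
      let ab := (revrowBoxes lam).getD m (0, 0)
      some (Function.update (Function.update T ab ((T ab).erase (i + 1))) xy
        (insert i (T xy)))
    else none
  else none

/-- The lowering crystal operator `f_i` on set-valued decomposition tableaux. -/
noncomputable def fCrystal (lam : List ℕ) (i : ℕ) (T : ℕ × ℕ → Finset ℕ) :
    Option (ℕ × ℕ → Finset ℕ) :=
  if _h : ∃ p, UnpairedLow i (revrowWord lam T) p then
    let p := Nat.findGreatest (fun p => UnpairedLow i (revrowWord lam T) p)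
      (revrowWord lam T).length
    let xy := ((revrowEntries lam T).getD p ((0, 0), 0)).1
    let T1 := Function.update T xy (insert (i + 1) ((T xy).erase i))
    if IsSetDecompTab lam T1 then some T1
    else if hab : ∃ m, boxIdx lam xy < m ∧ m < (revrowBoxes lam).length ∧
        i ∈ T ((revrowBoxes lam).getD m (0, 0)) ∧
        i + 1 ∈ T ((revrowBoxes lam).getD m (0, 0)) then
      let ab := (revrowBoxes lam).getD (Nat.find hab) (0, 0)
      some (Function.update (Function.update T ab ((T ab).erase i)) xy
        (insert (i + 1) (T xy)))
    else none
  else none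

/-- The queer raising operator `e_1̄` on set-valued decomposition tableaux. -/
noncomputable def eBarCrystal (lam : List ℕ) (T : ℕ × ℕ → Finset ℕ) :
    Option (ℕ × ℕ → Finset ℕ) :=
  if h : ∃ p, p < (revrowWord lam T).length ∧ (revrowWord lam T).getD p 0 = 2 ∧
      ∀ q < p, (revrowWord lam T).getD q 0 ≠ 1 then
    let xy := ((revrowEntries lam T).getD (Nat.find h) ((0, 0), 0)).1
    if 1 ∈ T xy then none
    else some (Function.update T xy (insert 1 ((T xy).erase 2)))
  else none

/-- The queer lowering operator `f_1̄` on set-valued decomposition tableaux. -/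
noncomputable def fBarCrystal (lam : List ℕ) (T : ℕ × ℕ → Finset ℕ) :
    Option (ℕ × ℕ → Finset ℕ) :=
  if h : ∃ p, p < (revrowWord lam T).length ∧ (revrowWord lam T).getD p 0 = 1 ∧
      ∀ q < p, (revrowWord lam T).getD q 0 ≠ 2 then
    let xy := ((revrowEntries lam T).getD (Nat.find h) ((0, 0), 0)).1
    some (Function.update T xy (insert 2 ((T xy).erase 1)))
  else none
/-! ## Multiset-valued decomposition tableaux -/

/-- A multiset-valued decomposition tableau in which only the entry `1` may repeat
within a box, all of whose distributions are decomposition tableaux. -/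
def IsMultisetDecompTab (lam : List ℕ) (T : ℕ × ℕ → Multiset ℕ) : Prop :=
  (∀ i j, InSD lam i j → T (i, j) ≠ 0 ∧ 0 ∉ T (i, j) ∧
      ∀ v : ℕ, v ≠ 1 → (T (i, j)).count v ≤ 1) ∧
  (∀ d : ℕ × ℕ → ℕ, (∀ i j, InSD lam i j → d (i, j) ∈ T (i, j)) → IsDecompTab lam d)

/-- Reverse row reading word of a multiset-valued tableau, with boxes recorded. -/
def revrowEntriesM (lam : List ℕ) (T : ℕ × ℕ → Multiset ℕ) : List ((ℕ × ℕ) × ℕ) :=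
  (revrowBoxes lam).flatMap fun b => (((T b).sort (· ≤ ·)).reverse).map fun v => (b, v)

/-- Reverse row reading word of a multiset-valued tableau. -/
def revrowWordM (lam : List ℕ) (T : ℕ × ℕ → Multiset ℕ) : List ℕ :=
  (revrowEntriesM lam T).map Prod.snd

/-- The operator `e*_1̄` on multiset-valued decomposition tableaux: if the first `2` of
the reverse row reading word occurs before every `1`, change it to a `1`. -/
noncomputable def eStarBar (lam : List ℕ) (T : ℕ × ℕ → Multiset ℕ) :
    Option (ℕ × ℕ → Multiset ℕ) :=
  if h : ∃ p, p < (revrowWordM lam T).length ∧ (revrowWordM lam T).getD p 0 = 2 ∧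
      ∀ q < p, (revrowWordM lam T).getD q 0 ≠ 1 then
    let b := ((revrowEntriesM lam T).getD (Nat.find h) ((0, 0), 0)).1
    some (Function.update T b (1 ::ₘ (T b).erase 2))
  else none

/-- The operator `f*_1̄` on multiset-valued decomposition tableaux: if the first `1` of
the reverse row reading word occurs before every `2`, change it to a `2`. -/
noncomputable def fStarBar (lam : List ℕ) (T : ℕ × ℕ → Multiset ℕ) :
    Option (ℕ × ℕ → Multiset ℕ) :=
  if h : ∃ p, p < (revrowWordM lam T).length ∧ (revrowWordM lam T).getD p 0 = 1 ∧
      ∀ q < p, (revrowWordM lam T).getD q 0 ≠ 2 then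
    let b := ((revrowEntriesM lam T).getD (Nat.find h) ((0, 0), 0)).1
    some (Function.update T b (2 ::ₘ (T b).erase 1))
  else none

/-! ## Linked `i`-words and square-root crystal operators -/

/-- Characters of a linked `i`-word: `(`, `)` and `-`. -/
inductive PChar : Type
  | op : PChar
  | cl : PChar
  | dash : PChar
  deriving DecidableEq

/-- The linked `i`-word of a set-valued tableau, with each character labelled by its box:
a box containing `i` but not `i+1` gives `)`, a box containing `i+1` but not `i` gives `(`,
and a box containing both gives `)-(`; boxes are read in reverse row reading order. -/
def tokens (lam : List ℕ) (i : ℕ) (T : ℕ × ℕ → Finset ℕ) : List (PChar × (ℕ × ℕ)) :=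
  (revrowBoxes lam).flatMap fun b =>
    if i ∈ T b ∧ i + 1 ∈ T b then [(PChar.cl, b), (PChar.dash, b), (PChar.op, b)]
    else if i ∈ T b then [(PChar.cl, b)]
    else if i + 1 ∈ T b then [(PChar.op, b)]
    else []

/-- Unmatched `(`s after scanning left to right (ignoring dashes). -/
def openCnt (u : List PChar) : ℕ :=
  u.foldl (fun acc a => match a with
    | PChar.op => acc + 1
    | PChar.cl => acc - 1
    | PChar.dash => acc) 0

/-- Unmatched `)`s after scanning right to left (ignoring dashes). -/
def closeCnt (u : List PChar) : ℕ :=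
  u.foldr (fun a acc => match a with
    | PChar.cl => acc + 1
    | PChar.op => acc - 1
    | PChar.dash => acc) 0

/-- Position `p` holds an unpaired `(`. -/
def UnpairedOp (ws : List PChar) (p : ℕ) : Prop :=
  p < ws.length ∧ ws.getD p PChar.dash = PChar.op ∧ closeCnt (ws.drop (p + 1)) = 0

/-- Position `p` holds an unpaired `)`. -/
def UnpairedCl (ws : List PChar) (p : ℕ) : Prop :=
  p < ws.length ∧ ws.getD p PChar.dash = PChar.cl ∧ openCnt (ws.take p) = 0

/-- A fully matched (balanced) parenthesis word, ignoring dashes. -/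
def BalancedP (u : List PChar) : Prop :=
  u.count PChar.op = u.count PChar.cl ∧
  ∀ k, (u.take k).count PChar.cl ≤ (u.take k).count PChar.op

/-- The `(` at position `a` is matched with the `)` at position `b`. -/
def MatchedPair (ws : List PChar) (a b : ℕ) : Prop :=
  a < b ∧ b < ws.length ∧ ws.getD a PChar.dash = PChar.op ∧
  ws.getD b PChar.dash = PChar.cl ∧ BalancedP ((ws.drop (a + 1)).take (b - (a + 1)))

/-- Generating relation for equivalence classes of characters: a matched pair together
with everything between them lies in one class, and so do the three characters `)-(`
coming from a single box. -/
def LinkRel (ws : List PChar) (p q : ℕ) : Prop :=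
  (∃ a b, MatchedPair ws a b ∧ a ≤ p ∧ p ≤ b ∧ a ≤ q ∧ q ≤ b) ∨
  (∃ d, 1 ≤ d ∧ d + 1 < ws.length ∧ ws.getD d PChar.op = PChar.dash ∧
    (p = d - 1 ∨ p = d ∨ p = d + 1) ∧ (q = d - 1 ∨ q = d ∨ q = d + 1))

/-- Two positions lie in the same equivalence class of the linked `i`-word. -/
def SameClass (ws : List PChar) : ℕ → ℕ → Prop := Relation.ReflTransGen (LinkRel ws)

/-- The class of position `p` contains an unpaired `(`. -/
def HasUnpairedOpIn (ws : List PChar) (p : ℕ) : Prop :=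
  ∃ q, SameClass ws p q ∧ UnpairedOp ws q

/-- The class of position `p` contains an unpaired `)`. -/
def HasUnpairedClIn (ws : List PChar) (p : ℕ) : Prop :=
  ∃ q, SameClass ws p q ∧ UnpairedCl ws q

/-- Position `p` belongs to a left form: a class with no unpaired `)` that ends
with an unpaired `(`. -/
def IsLeftFormAt (ws : List PChar) (p : ℕ) : Prop :=
  p < ws.length ∧ HasUnpairedOpIn ws p ∧ ¬ HasUnpairedClIn ws p

/-- Position `p` belongs to a right form: a class with no unpaired `(` that starts
with an unpaired `)`. -/
def IsRightFormAt (ws : List PChar) (p : ℕ) : Prop :=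
  p < ws.length ∧ HasUnpairedClIn ws p ∧ ¬ HasUnpairedOpIn ws p

/-- The square-root raising operator `e'_i` on set-valued decomposition tableaux. -/
noncomputable def eSqrt (lam : List ℕ) (i : ℕ) (T : ℕ × ℕ → Finset ℕ) :
    Option (ℕ × ℕ → Finset ℕ) :=
  let tk := tokens lam i T
  let ws := tk.map Prod.fst
  if hc : ∃ p, UnpairedOp ws p ∧ HasUnpairedClIn ws p then
    -- the `)-(` at the end of the combined form: remove `i+1` from its box
    let b := (tk.getD (Nat.find hc) (PChar.op, (0, 0))).2
    some (Function.update T b ((T b).erase (i + 1)))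
  else if hl : ∃ p, IsLeftFormAt ws p then
    -- the `(` at the start of the first left form: add `i` to its box
    let b := (tk.getD (Nat.find hl) (PChar.op, (0, 0))).2
    some (Function.update T b (insert i (T b)))
  else none

/-- The square-root lowering operator `f'_i` on set-valued decomposition tableaux. -/
noncomputable def fSqrt (lam : List ℕ) (i : ℕ) (T : ℕ × ℕ → Finset ℕ) :
    Option (ℕ × ℕ → Finset ℕ) :=
  let tk := tokens lam i T
  let ws := tk.map Prod.fst
  if hc : ∃ p, UnpairedCl ws p ∧ HasUnpairedOpIn ws p then
    -- the `)-(` at the beginning of the combined form: remove `i` from its box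
    let b := (tk.getD (Nat.find hc) (PChar.op, (0, 0))).2
    some (Function.update T b ((T b).erase i))
  else if _hr : ∃ p, IsRightFormAt ws p then
    -- the `)` at the end of the last right form: add `i+1` to its box
    let b := (tk.getD (Nat.findGreatest (fun p => IsRightFormAt ws p) ws.length)
        (PChar.op, (0, 0))).2
    some (Function.update T b (insert (i + 1) (T b)))
  else none

/-- The square-root queer raising operator `e'_1̄`. -/
noncomputable def eBarSqrt (lam : List ℕ) (T : ℕ × ℕ → Finset ℕ) :
    Option (ℕ × ℕ → Finset ℕ) :=
  if h : ∃ m, m < (revrowBoxes lam).length ∧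
      (1 ∈ T ((revrowBoxes lam).getD m (0, 0)) ∨ 2 ∈ T ((revrowBoxes lam).getD m (0, 0))) then
    let b := (revrowBoxes lam).getD (Nat.find h) (0, 0)
    if 1 ∈ T b then
      if 2 ∈ T b then some (Function.update T b ((T b).erase 2)) else none
    else some (Function.update T b (insert 1 (T b)))
  else none

/-- The square-root queer lowering operator `f'_1̄`. -/
noncomputable def fBarSqrt (lam : List ℕ) (T : ℕ × ℕ → Finset ℕ) :
    Option (ℕ × ℕ → Finset ℕ) :=
  if h : ∃ m, m < (revrowBoxes lam).length ∧
      (1 ∈ T ((revrowBoxes lam).getD m (0, 0)) ∨ 2 ∈ T ((revrowBoxes lam).getD m (0, 0))) then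
    let b := (revrowBoxes lam).getD (Nat.find h) (0, 0)
    if 2 ∈ T b then
      if 1 ∈ T b then some (Function.update T b ((T b).erase 1)) else none
    else some (Function.update T b (insert 2 (T b)))
  else none
/-! ## Abstract √gl_n- and √q_n-crystals -/

/-- The data of a crystal-like structure: a weight map (coordinates `1, …, n` are the
relevant ones) and partial raising/lowering operators indexed by `i ∈ [n-1]`. -/
structure SqGlData (B : Type*) where
  wt : B → ℕ → ℕ
  e : ℕ → B → Option B
  f : ℕ → B → Option B

/-- The axioms of a `√gl_n`-crystal. -/
def IsSqGlCrystal {B : Type*} (n : ℕ) (D : SqGlData B) : Prop :=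
  (∀ i, 1 ≤ i → i < n → ∀ b, ∃ ep ph : ℕ,
      HasStringLen (D.e i) b ep ∧ HasStringLen (D.f i) b ph ∧
      Even (ep + ph) ∧ (ph : ℤ) - ep = 2 * ((D.wt b i : ℤ) - D.wt b (i + 1))) ∧
  (∀ i, 1 ≤ i → i < n → ∀ b c, D.e i b = some c ↔ D.f i c = some b) ∧
  (∀ i, 1 ≤ i → i < n → ∀ b c, D.e i b = some c → ∀ ep, HasStringLen (D.e i) b ep →
      ∀ k, (D.wt c k : ℤ) - D.wt b k =
        if Even ep then (if k = i then 1 else 0) else (if k = i + 1 then -1 else 0))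

/-- The data of a queer crystal-like structure. -/
structure SqQData (B : Type*) extends SqGlData B where
  ebar : B → Option B
  fbar : B → Option B

/-- The axioms of a `√q_n`-crystal. -/
def IsSqQnCrystal {B : Type*} (n : ℕ) (D : SqQData B) : Prop :=
  IsSqGlCrystal n D.toSqGlData ∧
  (∀ i, 3 ≤ i → i < n → ∀ b,
      (D.e i b).bind D.ebar = (D.ebar b).bind (D.e i) ∧
      (D.f i b).bind D.ebar = (D.ebar b).bind (D.f i) ∧
      (D.e i b).bind D.fbar = (D.fbar b).bind (D.e i) ∧
      (D.f i b).bind D.fbar = (D.fbar b).bind (D.f i)) ∧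
  (∀ i, 3 ≤ i → i < n → ∀ b c, (D.ebar b = some c ∨ D.fbar b = some c) →
      (∀ m, HasStringLen (D.e i) b m ↔ HasStringLen (D.e i) c m) ∧
      (∀ m, HasStringLen (D.f i) b m ↔ HasStringLen (D.f i) c m)) ∧
  (∀ b, ∃ ep ph : ℕ, HasStringLen D.ebar b ep ∧ HasStringLen D.fbar b ph ∧
      ep + ph = (if D.wt b 1 = 0 ∧ D.wt b 2 = 0 then 0 else 2)) ∧
  (∀ b c, D.ebar b = some c ↔ D.fbar c = some b) ∧
  (∀ b c, D.ebar b = some c → ∀ ep, HasStringLen D.ebar b ep →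
      ∀ k, (D.wt c k : ℤ) - D.wt b k =
        if ep = 2 then (if k = 1 then 1 else 0) else (if k = 2 then -1 else 0))

/-- The square of a partial operator. -/
def sqOp {B : Type*} (g : B → Option B) : B → Option B := fun b => (g b).bind g

/-- The axioms of a (seminormal) `gl_n`-crystal for given weight map and operators. -/
def GlSeminormalAxioms {B : Type*} (n : ℕ) (wt : B → ℕ → ℕ)
    (E F : ℕ → B → Option B) : Prop :=
  (∀ i, 1 ≤ i → i < n → ∀ b c, E i b = some c ↔ F i c = some b) ∧
  (∀ i, 1 ≤ i → i < n → ∀ b c, E i b = some c →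
      ∀ k, (wt c k : ℤ) - wt b k = (if k = i then 1 else 0) - (if k = i + 1 then 1 else 0)) ∧
  (∀ i, 1 ≤ i → i < n → ∀ b, ∃ ep ph : ℕ,
      HasStringLen (E i) b ep ∧ HasStringLen (F i) b ph ∧
      (ph : ℤ) - ep = (wt b i : ℤ) - wt b (i + 1))

/-- The additional axioms making a `gl_n`-crystal into a `q_n`-crystal. -/
def QnExtraAxioms {B : Type*} (n : ℕ) (wt : B → ℕ → ℕ)
    (E F : ℕ → B → Option B) (Eb Fb : B → Option B) : Prop :=
  (∀ i, 3 ≤ i → i < n → ∀ b,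
      (E i b).bind Eb = (Eb b).bind (E i) ∧ (F i b).bind Eb = (Eb b).bind (F i) ∧
      (E i b).bind Fb = (Fb b).bind (E i) ∧ (F i b).bind Fb = (Fb b).bind (F i)) ∧
  (∀ i, 3 ≤ i → i < n → ∀ b c, (Eb b = some c ∨ Fb b = some c) →
      (∀ m, HasStringLen (E i) b m ↔ HasStringLen (E i) c m) ∧
      (∀ m, HasStringLen (F i) b m ↔ HasStringLen (F i) c m)) ∧
  (∀ b c, Eb b = some c ↔ Fb c = some b) ∧
  (∀ b c, Eb b = some c →
      ∀ k, (wt c k : ℤ) - wt b k = (if k = 1 then 1 else 0) - (if k = 2 then 1 else 0))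

/-- String length as a function (the supremum of the set of iterates that survive). -/
noncomputable def strLen {B : Type*} (g : B → Option B) (b : B) : ℕ :=
  sSup {k | iterOpt g k b ≠ none}

/-- Tensor product of `√gl_n`-crystal data. -/
noncomputable def tensorGl {B C : Type*} (DB : SqGlData B) (DC : SqGlData C) :
    SqGlData (B × C) where
  wt := fun bc k => DB.wt bc.1 k + DC.wt bc.2 k
  e := fun i bc =>
    if strLen (DB.e i) bc.1 ≤ strLen (DC.f i) bc.2 then
      (DC.e i bc.2).map fun c' => (bc.1, c')
    else (DB.e i bc.1).map fun b' => (b', bc.2)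
  f := fun i bc =>
    if strLen (DB.e i) bc.1 < strLen (DC.f i) bc.2 then
      (DC.f i bc.2).map fun c' => (bc.1, c')
    else (DB.f i bc.1).map fun b' => (b', bc.2)

/-- Tensor product of `√q_n`-crystal data. -/
noncomputable def tensorQ {B C : Type*} (DB : SqQData B) (DC : SqQData C) :
    SqQData (B × C) where
  toSqGlData := tensorGl DB.toSqGlData DC.toSqGlData
  ebar := fun bc =>
    if DB.wt bc.1 1 = 0 ∧ DB.wt bc.1 2 = 0 then (DC.ebar bc.2).map fun c' => (bc.1, c')
    else (DB.ebar bc.1).map fun b' => (b', bc.2)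
  fbar := fun bc =>
    if DB.wt bc.1 1 = 0 ∧ DB.wt bc.1 2 = 0 then (DC.fbar bc.2).map fun c' => (bc.1, c')
    else (DB.fbar bc.1).map fun b' => (b', bc.2)
/-! ## Generating functions -/

/-- A set-valued decomposition tableau, normalized to be empty off the shifted diagram. -/
def IsNormalizedSVDT (lam : List ℕ) (T : ℕ × ℕ → Finset ℕ) : Prop :=
  IsSetDecompTab lam T ∧ ∀ i j, ¬ InSD lam i j → T (i, j) = ∅

/-- A decomposition tableau, normalized to be `0` off the shifted diagram. -/
def IsNormalizedDT (lam : List ℕ) (T : ℕ × ℕ → ℕ) : Prop :=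
  IsDecompTab lam T ∧ ∀ i j, ¬ InSD lam i j → T (i, j) = 0

/-- `Σ_λ = ∑_{T ∈ SetDecTab(λ)} x^T` as a formal power series; variable `k` stands for
`x_{k+1}`, i.e. records occurrences of the letter `k+1`. -/
noncomputable def SigmaLam (lam : List ℕ) : MvPowerSeries ℕ ℤ :=
  fun d => (Set.ncard
    {T : ℕ × ℕ → Finset ℕ | IsNormalizedSVDT lam T ∧ ∀ k, wtSet lam T (k + 1) = d k} : ℤ)

/-- The Schur `P`-function `P_λ = ∑_{T ∈ DecTab(λ)} x^T` as a formal power series. -/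
noncomputable def SchurPfun (lam : List ℕ) : MvPowerSeries ℕ ℤ :=
  fun d => (Set.ncard
    {T : ℕ × ℕ → ℕ | IsNormalizedDT lam T ∧ ∀ k, wtNum lam T (k + 1) = d k} : ℤ)

/-! ## Marked (primed) shifted tableaux and `GP`-functions.
We encode the marked alphabet `1' < 1 < 2' < 2 < ⋯` into `ℕ` by `k' ↦ 2k - 1` and
`k ↦ 2k`, so primed letters are odd and the natural order is preserved. -/

/-- A semistandard marked shifted tableau (as a distribution): weakly increasing rows and
columns, no primed (odd) letter repeated in a row, no unprimed (even) letter repeated in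
a column. -/
def IsSemistandardMarked (lam : List ℕ) (d : ℕ × ℕ → ℕ) : Prop :=
  (∀ i j, InSD lam i j → InSD lam i (j + 1) → d (i, j) ≤ d (i, j + 1)) ∧
  (∀ i j, InSD lam i j → InSD lam (i + 1) j → d (i, j) ≤ d (i + 1, j)) ∧
  (∀ i j j', InSD lam i j → InSD lam i j' → j < j' → d (i, j) = d (i, j') →
    Even (d (i, j))) ∧
  (∀ i i' j, InSD lam i j → InSD lam i' j → i < i' → d (i, j) = d (i', j) →
    Odd (d (i, j)))

/-- A semistandard set-valued shifted tableau in the marked alphabet, with no primed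
letters on the main diagonal. -/
def IsSetSSMarkedShifted (lam : List ℕ) (T : ℕ × ℕ → Finset ℕ) : Prop :=
  (∀ i j, InSD lam i j → (T (i, j)).Nonempty ∧ ∀ v ∈ T (i, j), 1 ≤ v) ∧
  (∀ i, InSD lam i i → ∀ v ∈ T (i, i), Even v) ∧
  (∀ d : ℕ × ℕ → ℕ, (∀ i j, InSD lam i j → d (i, j) ∈ T (i, j)) →
    IsSemistandardMarked lam d)

/-- `wtMarked lam T k` is the total number of occurrences of `k` or `k'` in `T`. -/
noncomputable def wtMarked (lam : List ℕ) (T : ℕ × ℕ → Finset ℕ) (k : ℕ) : ℕ :=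
  ((revrowBoxes lam).map fun b =>
    ((T b).filter fun v => v = 2 * k - 1 ∨ v = 2 * k).card).sum

/-- The K-theoretic Schur `P`-function `GP_λ` as a formal power series; variable `k`
stands for `x_{k+1}`. -/
noncomputable def GPfun (lam : List ℕ) : MvPowerSeries ℕ ℤ :=
  fun d => (Set.ncard
    {T : ℕ × ℕ → Finset ℕ | IsSetSSMarkedShifted lam T ∧
      (∀ i j, ¬ InSD lam i j → T (i, j) = ∅) ∧
      ∀ k, wtMarked lam T (k + 1) = d k} : ℤ)

/-! ## Polynomial versions (variables `x_1, …, x_n`, i.e. `X 1, …, X n`) -/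

/-- The boxes of the (unshifted) Young diagram of `lam`, listed row by row. -/
def YDboxes (lam : List ℕ) : List (ℕ × ℕ) :=
  (List.range lam.length).flatMap fun r =>
    (List.range (lam.getD r 0)).map fun j => (r + 1, j + 1)

/-- A semistandard (unshifted) Young tableau: rows weakly increase, columns strictly
increase. -/
def IsSemistandardYT (lam : List ℕ) (d : ℕ × ℕ → ℕ) : Prop :=
  (∀ i j, InYD lam i j → InYD lam i (j + 1) → d (i, j) ≤ d (i, j + 1)) ∧
  (∀ i j, InYD lam i j → InYD lam (i + 1) j → d (i, j) < d (i + 1, j))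

/-- A semistandard set-valued (unshifted) tableau with entries in `{1, …, n}`,
normalized off the diagram. -/
def IsSetSSYT (n : ℕ) (lam : List ℕ) (T : ℕ × ℕ → Finset ℕ) : Prop :=
  (∀ i j, InYD lam i j → (T (i, j)).Nonempty ∧ ∀ v ∈ T (i, j), 1 ≤ v ∧ v ≤ n) ∧
  (∀ i j, ¬ InYD lam i j → T (i, j) = ∅) ∧
  (∀ d : ℕ × ℕ → ℕ, (∀ i j, InYD lam i j → d (i, j) ∈ T (i, j)) → IsSemistandardYT lam d)

/-- The symmetric Grothendieck polynomial `G_λ(x_1, …, x_n)`. -/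
noncomputable def Gpoly (n : ℕ) (lam : List ℕ) : MvPolynomial ℕ ℤ :=
  ∑ᶠ T ∈ {T : ℕ × ℕ → Finset ℕ | IsSetSSYT n lam T},
    ((YDboxes lam).map fun b =>
      ∏ v ∈ T b, (MvPolynomial.X v : MvPolynomial ℕ ℤ)).prod

/-- A semistandard set-valued marked shifted tableau with letters at most `n`,
normalized off the diagram. -/
def IsSetSSMarkedShiftedN (n : ℕ) (lam : List ℕ) (T : ℕ × ℕ → Finset ℕ) : Prop :=
  IsSetSSMarkedShifted lam T ∧ (∀ i j, ¬ InSD lam i j → T (i, j) = ∅) ∧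
  ∀ i j, InSD lam i j → ∀ v ∈ T (i, j), v ≤ 2 * n

/-- The K-theoretic Schur `P`-polynomial `GP_λ(x_1, …, x_n)`. -/
noncomputable def GPpoly (n : ℕ) (lam : List ℕ) : MvPolynomial ℕ ℤ :=
  ∑ᶠ T ∈ {T : ℕ × ℕ → Finset ℕ | IsSetSSMarkedShiftedN n lam T},
    ((revrowBoxes lam).map fun b =>
      ∏ v ∈ T b, (MvPolynomial.X ((v + 1) / 2) : MvPolynomial ℕ ℤ)).prod

/-- The character of the `m`-th tensor power of the standard `√q_n`-crystal, whose
elements are the nonempty subsets of `{1, …, n}` with weight the indicator vector. -/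
noncomputable def standardChar (n m : ℕ) : MvPolynomial ℕ ℤ :=
  ∑ b : Fin m → {S : Finset (Fin n) // S.Nonempty},
    ∏ j : Fin m, ∏ k ∈ (b j).1, (MvPolynomial.X ((k : ℕ) + 1) : MvPolynomial ℕ ℤ)


/-!
Both tensor rules have the same shape: an operator on `B × C` that acts on the right factor
where a predicate holds and on the left factor elsewhere (`prodOp`). String lengths,
adjointness and commutation of such operators come from the factors as soon as the predicates
involved are stable under the moves in question.

For `e'_i, f'_i` the predicate `ε'_i(b) ≤ φ'_i(c)` moves by exactly one unit at each step, so
the string lengths of `b ⊗ c` are `ε'_i(c) + (ε'_i(b) - φ'_i(c))₊` and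
`φ'_i(b) + (φ'_i(c) - ε'_i(b))₊`, and the `√gl_n` axioms follow by arithmetic. For the queer
operators the predicate `wt(b)_1 = wt(b)_2 = 0` fails at both ends of every `e'_1̄`-arrow of `B`
(because `ε'_1̄ + φ'_1̄ = 0` exactly when it holds), so an orbit that starts on the left factor
stays there. For `i ≥ 3` this predicate is preserved by `e'_i, f'_i`, which do not change the
first two weight coordinates, and `ε'_i ≤ φ'_i` is preserved by `e'_1̄, f'_1̄`, which keep
`ε'_i, φ'_i`; hence the commutation relations.
-/

section StringLength

variable {α : Type*} {g : α → Option α} {a a' : α} {m m' : ℕ}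

theorem iterOpt_add (g : α → Option α) (k j : ℕ) (a : α) :
    iterOpt g (k + j) a = (iterOpt g k a).bind (iterOpt g j) := by
  induction k generalizing a with
  | zero => simp [iterOpt]
  | succ k ih =>
    rw [Nat.add_right_comm, iterOpt, iterOpt, Option.bind_assoc]
    simp only [ih]

theorem iterOpt_eq_none_of_le {k k' : ℕ} (h : iterOpt g k a = none) (hk : k ≤ k') :
    iterOpt g k' a = none := by
  obtain ⟨j, rfl⟩ := Nat.exists_eq_add_of_le hk
  rw [iterOpt_add, h, Option.bind_none]

theorem hasStringLen_zero_iff : HasStringLen g a 0 ↔ g a = none := by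
  simp [HasStringLen, iterOpt]

theorem hasStringLen_succ_iff :
    HasStringLen g a (m + 1) ↔ ∃ a', g a = some a' ∧ HasStringLen g a' m := by
  cases h : g a <;> simp [HasStringLen, iterOpt, h]

namespace HasStringLen

theorem iterOpt_ne_none_iff (h : HasStringLen g a m) (k : ℕ) :
    iterOpt g k a ≠ none ↔ k ≤ m :=
  ⟨fun hk => by_contra fun hmk => hk (iterOpt_eq_none_of_le h.2 (by omega)),
    fun hk hk' => h.1 (iterOpt_eq_none_of_le hk' hk)⟩

theorem unique (h : HasStringLen g a m) (h' : HasStringLen g a m') : m = m' :=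
  le_antisymm ((h'.iterOpt_ne_none_iff m).1 h.1) ((h.iterOpt_ne_none_iff m').1 h'.1)

theorem iff_eq (h : HasStringLen g a m) : HasStringLen g a m' ↔ m' = m :=
  ⟨fun h' => h'.unique h, fun e => e ▸ h⟩

theorem strLen_eq (h : HasStringLen g a m) : strLen g a = m := by
  have hset : {k | iterOpt g k a ≠ none} = Set.Iic m := Set.ext h.iterOpt_ne_none_iff
  rw [strLen, hset, csSup_Iic]

end HasStringLen

theorem strLen_eq_succ_of_eq_some (hg : g a = some a') (h : HasStringLen g a' m) :
    strLen g a = strLen g a' + 1 := by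
  rw [h.strLen_eq, (hasStringLen_succ_iff.2 ⟨a', hg, h⟩).strLen_eq]

end StringLength

section ProdOp

variable {B C : Type*}

def prodOp (p : B → C → Prop) [DecidableRel p] (g : B → Option B) (h : C → Option C)
    (bc : B × C) : Option (B × C) :=
  if p bc.1 bc.2 then (h bc.2).map (bc.1, ·) else (g bc.1).map (·, bc.2)

variable {p q : B → C → Prop} [DecidableRel p] [DecidableRel q]
  {g g' : B → Option B} {h h' : C → Option C} {b b' : B} {c c' : C}

theorem prodOp_of_pos (hp : p b c) : prodOp p g h (b, c) = (h c).map (b, ·) := if_pos hp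

theorem prodOp_of_neg (hp : ¬p b c) : prodOp p g h (b, c) = (g b).map (·, c) := if_neg hp

theorem prodOp_eq_some_iff :
    prodOp p g h (b, c) = some (b', c') ↔
      (p b c ∧ h c = some c' ∧ b = b') ∨ (¬p b c ∧ g b = some b' ∧ c = c') := by
  by_cases hp : p b c <;> simp [prodOp, hp, Prod.ext_iff]

theorem prodOp_adjoint (hg : ∀ b b', g b = some b' ↔ g' b' = some b)
    (hh : ∀ c c', h c = some c' ↔ h' c' = some c)
    (hpq_left : ∀ b b' c, g b = some b' → (p b c ↔ q b' c))
    (hpq_right : ∀ b c c', h c = some c' → (p b c ↔ q b c')) (x y : B × C) :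
    prodOp p g h x = some y ↔ prodOp q g' h' y = some x := by
  obtain ⟨b, c⟩ := x
  obtain ⟨b', c'⟩ := y
  simp only [prodOp_eq_some_iff]
  constructor
  · rintro (⟨hp, hc, rfl⟩ | ⟨hp, hb, rfl⟩)
    · exact Or.inl ⟨(hpq_right _ _ _ hc).1 hp, (hh _ _).1 hc, rfl⟩
    · exact Or.inr ⟨mt (hpq_left _ _ _ hb).2 hp, (hg _ _).1 hb, rfl⟩
  · rintro (⟨hq, hc, rfl⟩ | ⟨hq, hb, rfl⟩)
    · exact Or.inl ⟨(hpq_right _ _ _ ((hh _ _).2 hc)).2 hq, (hh _ _).2 hc, rfl⟩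
    · exact Or.inr ⟨mt (hpq_left _ _ _ ((hg _ _).2 hb)).1 hq, (hg _ _).2 hb, rfl⟩

theorem HasStringLen.prodOp_right_step (hp : p b c) (hc : h c = some c')
    (hm : HasStringLen (prodOp p g h) (b, c') m) : HasStringLen (prodOp p g h) (b, c) (m + 1) :=
  hasStringLen_succ_iff.2 ⟨(b, c'), by simp [prodOp_of_pos hp, hc], hm⟩

theorem HasStringLen.prodOp_left_step (hp : ¬p b c) (hb : g b = some b')
    (hm : HasStringLen (prodOp p g h) (b', c) m) : HasStringLen (prodOp p g h) (b, c) (m + 1) :=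
  hasStringLen_succ_iff.2 ⟨(b', c), by simp [prodOp_of_neg hp, hb], hm⟩

theorem hasStringLen_prodOp_right (hp : p b c) (hstab : ∀ c c', h c = some c' → p b c → p b c')
    (hm : HasStringLen h c m) : HasStringLen (prodOp p g h) (b, c) m := by
  induction m generalizing c with
  | zero =>
    rw [hasStringLen_zero_iff] at hm ⊢
    simp [prodOp_of_pos hp, hm]
  | succ m ih =>
    obtain ⟨c', hc', hm'⟩ := hasStringLen_succ_iff.1 hm
    exact (ih (hstab c c' hc' hp) hm').prodOp_right_step hp hc'

theorem hasStringLen_prodOp_left (hp : ¬p b c)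
    (hstab : ∀ b b', g b = some b' → ¬p b c → ¬p b' c)
    (hm : HasStringLen g b m) : HasStringLen (prodOp p g h) (b, c) m := by
  induction m generalizing b with
  | zero =>
    rw [hasStringLen_zero_iff] at hm ⊢
    simp [prodOp_of_neg hp, hm]
  | succ m ih =>
    obtain ⟨b', hb', hm'⟩ := hasStringLen_succ_iff.1 hm
    exact (ih (hstab b b' hb' hp) hm').prodOp_left_step hp hb'

theorem prodOp_bind_comm {XB YB : B → Option B} {XC YC : C → Option C}
    (hB : ∀ b, (XB b).bind YB = (YB b).bind XB) (hC : ∀ c, (XC c).bind YC = (YC c).bind XC)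
    (hp_left : ∀ b b' c, YB b = some b' → (p b' c ↔ p b c))
    (hp_right : ∀ b c c', YC c = some c' → (p b c' ↔ p b c))
    (hq_left : ∀ b b' c, XB b = some b' → (q b' c ↔ q b c))
    (hq_right : ∀ b c c', XC c = some c' → (q b c' ↔ q b c)) (x : B × C) :
    (prodOp p XB XC x).bind (prodOp q YB YC) = (prodOp q YB YC x).bind (prodOp p XB XC) := by
  obtain ⟨b, c⟩ := x
  by_cases hp : p b c <;> by_cases hq : q b c
  · have h₁ : ∀ c₁, XC c = some c₁ → prodOp q YB YC (b, c₁) = (YC c₁).map (b, ·) :=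
      fun c₁ h₁ => prodOp_of_pos ((hq_right b c c₁ h₁).2 hq)
    have h₂ : ∀ c₂, YC c = some c₂ → prodOp p XB XC (b, c₂) = (XC c₂).map (b, ·) :=
      fun c₂ h₂ => prodOp_of_pos ((hp_right b c c₂ h₂).2 hp)
    rw [prodOp_of_pos hp, prodOp_of_pos hq]
    calc ((XC c).map (b, ·)).bind (prodOp q YB YC) = ((XC c).bind YC).map (b, ·) := by
          cases hxc : XC c <;> simp [h₁, hxc]
      _ = ((YC c).bind XC).map (b, ·) := by rw [hC]
      _ = ((YC c).map (b, ·)).bind (prodOp p XB XC) := by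
          cases hyc : YC c <;> simp [h₂, hyc]
  · have h₁ : ∀ c₁, XC c = some c₁ → prodOp q YB YC (b, c₁) = (YB b).map (·, c₁) :=
      fun c₁ h₁ => prodOp_of_neg (mt (hq_right b c c₁ h₁).1 hq)
    have h₂ : ∀ b₂, YB b = some b₂ → prodOp p XB XC (b₂, c) = (XC c).map (b₂, ·) :=
      fun b₂ h₂ => prodOp_of_pos ((hp_left b b₂ c h₂).2 hp)
    rw [prodOp_of_pos hp, prodOp_of_neg hq]
    cases hxc : XC c <;> cases hyb : YB b <;> simp_all
  · have h₁ : ∀ b₁, XB b = some b₁ → prodOp q YB YC (b₁, c) = (YC c).map (b₁, ·) :=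
      fun b₁ h₁ => prodOp_of_pos ((hq_left b b₁ c h₁).2 hq)
    have h₂ : ∀ c₂, YC c = some c₂ → prodOp p XB XC (b, c₂) = (XB b).map (·, c₂) :=
      fun c₂ h₂ => prodOp_of_neg (mt (hp_right b c c₂ h₂).1 hp)
    rw [prodOp_of_neg hp, prodOp_of_pos hq]
    cases hxb : XB b <;> cases hyc : YC c <;> simp_all
  · have h₁ : ∀ b₁, XB b = some b₁ → prodOp q YB YC (b₁, c) = (YB b₁).map (·, c) :=
      fun b₁ h₁ => prodOp_of_neg (mt (hq_left b b₁ c h₁).1 hq)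
    have h₂ : ∀ b₂, YB b = some b₂ → prodOp p XB XC (b₂, c) = (XB b₂).map (·, c) :=
      fun b₂ h₂ => prodOp_of_neg (mt (hp_left b b₂ c h₂).1 hp)
    rw [prodOp_of_neg hp, prodOp_of_neg hq]
    calc ((XB b).map (·, c)).bind (prodOp q YB YC) = ((XB b).bind YB).map (·, c) := by
          cases hxb : XB b <;> simp [h₁, hxb]
      _ = ((YB b).bind XB).map (·, c) := by rw [hB]
      _ = ((YB b).map (·, c)).bind (prodOp p XB XC) := by
          cases hyb : YB b <;> simp [h₂, hyb]

end ProdOp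

namespace IsSqGlCrystal

variable {B : Type*} {n i : ℕ} {D : SqGlData B} {b b' : B}

theorem strLen_e_eq_succ (hD : IsSqGlCrystal n D) (h1 : 1 ≤ i) (hn : i < n)
    (h : D.e i b = some b') : strLen (D.e i) b = strLen (D.e i) b' + 1 := by
  obtain ⟨a, -, ha, -⟩ := hD.1 i h1 hn b'
  exact strLen_eq_succ_of_eq_some h ha

theorem strLen_f_eq_succ (hD : IsSqGlCrystal n D) (h1 : 1 ≤ i) (hn : i < n)
    (h : D.e i b = some b') : strLen (D.f i) b' = strLen (D.f i) b + 1 := by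
  obtain ⟨-, y, -, hy, -⟩ := hD.1 i h1 hn b
  exact strLen_eq_succ_of_eq_some ((hD.2.1 i h1 hn b b').1 h) hy

theorem wt_eq_of_e_eq_some (hD : IsSqGlCrystal n D) (h1 : 1 ≤ i) (hn : i < n)
    (h : D.e i b = some b') {k : ℕ} (hki : k ≠ i) (hki' : k ≠ i + 1) : D.wt b' k = D.wt b k := by
  obtain ⟨a, -, ha, -⟩ := hD.1 i h1 hn b
  have := hD.2.2 i h1 hn b b' h a ha k
  simp only [hki, hki', if_false, ite_self] at this
  omega

theorem wt_eq_of_f_eq_some (hD : IsSqGlCrystal n D) (h1 : 1 ≤ i) (hn : i < n)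
    (h : D.f i b = some b') {k : ℕ} (hki : k ≠ i) (hki' : k ≠ i + 1) : D.wt b' k = D.wt b k :=
  (hD.wt_eq_of_e_eq_some h1 hn ((hD.2.1 i h1 hn b' b).2 h) hki hki').symm

end IsSqGlCrystal

section TensorGl

variable {B C : Type*} {n i : ℕ} {DB : SqGlData B} {DC : SqGlData C}

theorem tensorGl_e_eq :
    (tensorGl DB DC).e i =
      prodOp (fun b c => strLen (DB.e i) b ≤ strLen (DC.f i) c) (DB.e i) (DC.e i) := rfl

theorem tensorGl_f_eq :
    (tensorGl DB DC).f i =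
      prodOp (fun b c => strLen (DB.e i) b < strLen (DC.f i) c) (DB.f i) (DC.f i) := rfl

theorem tensorGl_wt (b : B) (c : C) (k : ℕ) :
    (tensorGl DB DC).wt (b, c) k = DB.wt b k + DC.wt c k := rfl

theorem hasStringLen_tensorGl_e (hC : IsSqGlCrystal n DC) (h1 : 1 ≤ i) (hn : i < n)
    {a x y : ℕ} {b : B} {c : C} (ha : HasStringLen (DB.e i) b a)
    (hx : HasStringLen (DC.e i) c x) (hy : HasStringLen (DC.f i) c y) :
    HasStringLen ((tensorGl DB DC).e i) (b, c) (x + (a - y)) := by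
  rw [tensorGl_e_eq]
  have right : ∀ {a : ℕ} {b : B}, HasStringLen (DB.e i) b a → a ≤ y →
      HasStringLen (prodOp (fun b c => strLen (DB.e i) b ≤ strLen (DC.f i) c) (DB.e i) (DC.e i))
        (b, c) x := fun ha hay =>
    hasStringLen_prodOp_right (by rwa [ha.strLen_eq, hy.strLen_eq])
      (fun c c' hc hle => by rw [hC.strLen_f_eq_succ h1 hn hc]; omega) hx
  induction a generalizing b with
  | zero => simpa using right ha (Nat.zero_le y)
  | succ a ih =>
    rcases le_or_gt (a + 1) y with hay | hay
    · rw [Nat.sub_eq_zero_of_le hay]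
      exact right ha hay
    · obtain ⟨b', hb', ha'⟩ := hasStringLen_succ_iff.1 ha
      rw [show x + (a + 1 - y) = x + (a - y) + 1 by omega]
      exact (ih ha').prodOp_left_step (by rw [ha.strLen_eq, hy.strLen_eq]; omega) hb'

theorem hasStringLen_tensorGl_f (hB : IsSqGlCrystal n DB) (h1 : 1 ≤ i) (hn : i < n)
    {a A y : ℕ} {b : B} {c : C} (ha : HasStringLen (DB.e i) b a)
    (hA : HasStringLen (DB.f i) b A) (hy : HasStringLen (DC.f i) c y) :
    HasStringLen ((tensorGl DB DC).f i) (b, c) (A + (y - a)) := by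
  rw [tensorGl_f_eq]
  have left : ∀ {y : ℕ} {c : C}, HasStringLen (DC.f i) c y → y ≤ a →
      HasStringLen (prodOp (fun b c => strLen (DB.e i) b < strLen (DC.f i) c) (DB.f i) (DC.f i))
        (b, c) A := fun hy hay =>
    hasStringLen_prodOp_left (by rw [ha.strLen_eq, hy.strLen_eq]; omega)
      (fun b b' hb hlt => by rw [hB.strLen_e_eq_succ h1 hn ((hB.2.1 i h1 hn b' b).2 hb)]; omega) hA
  induction y generalizing c with
  | zero => simpa using left hy (Nat.zero_le a)
  | succ y ih =>
    rcases le_or_gt (y + 1) a with hay | hay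
    · rw [Nat.sub_eq_zero_of_le hay, add_zero]
      exact left hy hay
    · obtain ⟨c', hc', hy'⟩ := hasStringLen_succ_iff.1 hy
      rw [show A + (y + 1 - a) = A + (y - a) + 1 by omega]
      exact (ih hy').prodOp_right_step (by rw [ha.strLen_eq, hy.strLen_eq]; omega) hc'

end TensorGl

def SqGlData.SameStringLens {B : Type*} (D : SqGlData B) (i : ℕ) (b b' : B) : Prop :=
  (∀ m, HasStringLen (D.e i) b m ↔ HasStringLen (D.e i) b' m) ∧
    (∀ m, HasStringLen (D.f i) b m ↔ HasStringLen (D.f i) b' m)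

theorem SqGlData.SameStringLens.refl {B : Type*} (D : SqGlData B) (i : ℕ) (b : B) :
    D.SameStringLens i b b :=
  ⟨fun _ => Iff.rfl, fun _ => Iff.rfl⟩

namespace IsSqGlCrystal

variable {B C : Type*} {n i : ℕ} {DB : SqGlData B} {DC : SqGlData C}

theorem tensorGl_e_eq_some_iff (hB : IsSqGlCrystal n DB) (hC : IsSqGlCrystal n DC)
    (h1 : 1 ≤ i) (hn : i < n) (x y : B × C) :
    (tensorGl DB DC).e i x = some y ↔ (tensorGl DB DC).f i y = some x := by
  rw [tensorGl_e_eq, tensorGl_f_eq]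
  refine prodOp_adjoint (hB.2.1 i h1 hn) (hC.2.1 i h1 hn) (fun b b' c hb => ?_)
    (fun b c c' hc => ?_) x y
  · rw [hB.strLen_e_eq_succ h1 hn hb]; omega
  · rw [hC.strLen_f_eq_succ h1 hn hc]; omega

theorem tensorGl_wt_sub (hB : IsSqGlCrystal n DB) (hC : IsSqGlCrystal n DC)
    (h1 : 1 ≤ i) (hn : i < n) {x y : B × C} (h : (tensorGl DB DC).e i x = some y) {ep : ℕ}
    (hep : HasStringLen ((tensorGl DB DC).e i) x ep) (k : ℕ) :
    ((tensorGl DB DC).wt y k : ℤ) - (tensorGl DB DC).wt x k =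
      if Even ep then (if k = i then 1 else 0) else (if k = i + 1 then -1 else 0) := by
  obtain ⟨b, c⟩ := x
  obtain ⟨b', c'⟩ := y
  obtain ⟨a, -, ha, -, -, -⟩ := hB.1 i h1 hn b
  obtain ⟨x, y, hx, hy, hxy, -⟩ := hC.1 i h1 hn c
  have hep' := hep.unique (hasStringLen_tensorGl_e hC h1 hn ha hx hy)
  rw [tensorGl_e_eq, prodOp_eq_some_iff, ha.strLen_eq, hy.strLen_eq] at h
  rw [tensorGl_wt, tensorGl_wt]
  push_cast
  rcases h with ⟨hay, hc, rfl⟩ | ⟨hay, hb, rfl⟩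
  · have hpar : Even ep ↔ Even x := by rw [hep', Nat.sub_eq_zero_of_le hay, add_zero]
    simp only [hpar, ← hC.2.2 i h1 hn c c' hc x hx k]
    ring
  · have hpar : Even ep ↔ Even a := by
      rw [Nat.even_iff] at hxy; rw [Nat.even_iff, Nat.even_iff]; omega
    simp only [hpar, ← hB.2.2 i h1 hn b b' hb a ha k]
    ring

theorem sameStringLens_tensorGl (hB : IsSqGlCrystal n DB) (hC : IsSqGlCrystal n DC)
    (h1 : 1 ≤ i) (hn : i < n) {b b' : B} {c c' : C} (hb : DB.SameStringLens i b b')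
    (hc : DC.SameStringLens i c c') : (tensorGl DB DC).SameStringLens i (b, c) (b', c') := by
  obtain ⟨a, A, ha, hA, -⟩ := hB.1 i h1 hn b
  obtain ⟨x, y, hx, hy, -⟩ := hC.1 i h1 hn c
  have he := hasStringLen_tensorGl_e hC h1 hn ha hx hy
  have he' := hasStringLen_tensorGl_e hC h1 hn ((hb.1 a).1 ha) ((hc.1 x).1 hx) ((hc.2 y).1 hy)
  have hf := hasStringLen_tensorGl_f hB h1 hn ha hA hy
  have hf' := hasStringLen_tensorGl_f hB h1 hn ((hb.1 a).1 ha) ((hb.2 A).1 hA) ((hc.2 y).1 hy)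
  exact ⟨fun m => by rw [he.iff_eq, he'.iff_eq], fun m => by rw [hf.iff_eq, hf'.iff_eq]⟩

end IsSqGlCrystal

theorem isSqGlCrystal_tensorGl {B C : Type*} {n : ℕ} {DB : SqGlData B} {DC : SqGlData C}
    (hB : IsSqGlCrystal n DB) (hC : IsSqGlCrystal n DC) : IsSqGlCrystal n (tensorGl DB DC) := by
  refine ⟨fun i h1 hn ⟨b, c⟩ => ?_, fun i h1 hn => hB.tensorGl_e_eq_some_iff hC h1 hn,
    fun i h1 hn _ _ h _ hep k => hB.tensorGl_wt_sub hC h1 hn h hep k⟩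
  obtain ⟨a, A, ha, hA, haA, hwtB⟩ := hB.1 i h1 hn b
  obtain ⟨x, y, hx, hy, hxy, hwtC⟩ := hC.1 i h1 hn c
  refine ⟨x + (a - y), A + (y - a), hasStringLen_tensorGl_e hC h1 hn ha hx hy,
    hasStringLen_tensorGl_f hB h1 hn ha hA hy, ?_, ?_⟩
  · rw [Nat.even_iff] at haA hxy ⊢
    omega
  · rw [tensorGl_wt, tensorGl_wt]
    omega

namespace IsSqQnCrystal

variable {B : Type*} {n i : ℕ} {D : SqQData B} {b b' : B}

theorem not_wt_eq_zero_of_ebar_eq_some (hD : IsSqQnCrystal n D) (h : D.ebar b = some b') :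
    ¬(D.wt b 1 = 0 ∧ D.wt b 2 = 0) ∧ ¬(D.wt b' 1 = 0 ∧ D.wt b' 2 = 0) := by
  obtain ⟨-, -, -, hbar, hadj, -⟩ := hD
  constructor <;> intro hw
  · obtain ⟨ep, _, hep, -, hsum⟩ := hbar b
    rw [if_pos hw, Nat.add_eq_zero_iff] at hsum
    rw [hsum.1, hasStringLen_zero_iff, h] at hep
    exact Option.some_ne_none _ hep
  · obtain ⟨_, ph, -, hph, hsum⟩ := hbar b'
    rw [if_pos hw, Nat.add_eq_zero_iff] at hsum
    rw [hsum.2, hasStringLen_zero_iff, (hadj b b').1 h] at hph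
    exact Option.some_ne_none _ hph

theorem not_wt_eq_zero_of_fbar_eq_some (hD : IsSqQnCrystal n D) (h : D.fbar b = some b') :
    ¬(D.wt b 1 = 0 ∧ D.wt b 2 = 0) ∧ ¬(D.wt b' 1 = 0 ∧ D.wt b' 2 = 0) :=
  (hD.not_wt_eq_zero_of_ebar_eq_some ((hD.2.2.2.2.1 b' b).2 h)).symm

theorem strLen_e_eq_of_bar (hD : IsSqQnCrystal n D) (h3 : 3 ≤ i) (hn : i < n)
    (h : D.ebar b = some b' ∨ D.fbar b = some b') : strLen (D.e i) b' = strLen (D.e i) b := by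
  obtain ⟨a, -, ha, -⟩ := hD.1.1 i (by omega) hn b
  rw [ha.strLen_eq, (((hD.2.2.1 i h3 hn b b' h).1 a).1 ha).strLen_eq]

theorem strLen_f_eq_of_bar (hD : IsSqQnCrystal n D) (h3 : 3 ≤ i) (hn : i < n)
    (h : D.ebar b = some b' ∨ D.fbar b = some b') : strLen (D.f i) b' = strLen (D.f i) b := by
  obtain ⟨-, y, -, hy, -⟩ := hD.1.1 i (by omega) hn b
  rw [hy.strLen_eq, (((hD.2.2.1 i h3 hn b b' h).2 y).1 hy).strLen_eq]

theorem wt_zero_iff_of_e_or_f (hD : IsSqQnCrystal n D) (h3 : 3 ≤ i) (hn : i < n)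
    (h : D.e i b = some b' ∨ D.f i b = some b') :
    (D.wt b' 1 = 0 ∧ D.wt b' 2 = 0) ↔ (D.wt b 1 = 0 ∧ D.wt b 2 = 0) := by
  have h1 : 1 ≤ i := by omega
  rcases h with h | h
  · rw [hD.1.wt_eq_of_e_eq_some h1 hn h (k := 1) (by omega) (by omega),
      hD.1.wt_eq_of_e_eq_some h1 hn h (k := 2) (by omega) (by omega)]
  · rw [hD.1.wt_eq_of_f_eq_some h1 hn h (k := 1) (by omega) (by omega),
      hD.1.wt_eq_of_f_eq_some h1 hn h (k := 2) (by omega) (by omega)]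

end IsSqQnCrystal

section TensorQ

variable {B C : Type*} {i : ℕ} {DB : SqQData B} {DC : SqQData C}

theorem tensorQ_e_eq :
    (tensorQ DB DC).e i =
      prodOp (fun b c => strLen (DB.e i) b ≤ strLen (DC.f i) c) (DB.e i) (DC.e i) := rfl

theorem tensorQ_f_eq :
    (tensorQ DB DC).f i =
      prodOp (fun b c => strLen (DB.e i) b < strLen (DC.f i) c) (DB.f i) (DC.f i) := rfl

theorem tensorQ_wt (b : B) (c : C) (k : ℕ) :
    (tensorQ DB DC).wt (b, c) k = DB.wt b k + DC.wt c k := rfl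

theorem tensorQ_ebar_eq :
    (tensorQ DB DC).ebar = prodOp (fun b _ => DB.wt b 1 = 0 ∧ DB.wt b 2 = 0) DB.ebar DC.ebar := rfl

theorem tensorQ_fbar_eq :
    (tensorQ DB DC).fbar = prodOp (fun b _ => DB.wt b 1 = 0 ∧ DB.wt b 2 = 0) DB.fbar DC.fbar := rfl

end TensorQ

namespace IsSqQnCrystal

variable {B C : Type*} {n i : ℕ} {DB : SqQData B} {DC : SqQData C}

theorem tensorQ_bind_comm (hB : IsSqQnCrystal n DB) (hC : IsSqQnCrystal n DC) (h3 : 3 ≤ i)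
    (hn : i < n) (x : B × C) :
    ((tensorQ DB DC).e i x).bind (tensorQ DB DC).ebar =
        ((tensorQ DB DC).ebar x).bind ((tensorQ DB DC).e i) ∧
      ((tensorQ DB DC).f i x).bind (tensorQ DB DC).ebar =
        ((tensorQ DB DC).ebar x).bind ((tensorQ DB DC).f i) ∧
      ((tensorQ DB DC).e i x).bind (tensorQ DB DC).fbar =
        ((tensorQ DB DC).fbar x).bind ((tensorQ DB DC).e i) ∧
      ((tensorQ DB DC).f i x).bind (tensorQ DB DC).fbar =
        ((tensorQ DB DC).fbar x).bind ((tensorQ DB DC).f i) := by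
  rw [tensorQ_e_eq, tensorQ_f_eq, tensorQ_ebar_eq, tensorQ_fbar_eq]
  have hBcomm := hB.2.1 i h3 hn
  have hCcomm := hC.2.1 i h3 hn
  refine ⟨?_, ?_, ?_, ?_⟩
  · refine prodOp_bind_comm (fun b => (hBcomm b).1) (fun c => (hCcomm c).1)
      (fun b b' c h => ?_) (fun b c c' h => ?_)
      (fun _ _ _ h => hB.wt_zero_iff_of_e_or_f h3 hn (.inl h)) (fun _ _ _ _ => Iff.rfl) x
    · rw [hB.strLen_e_eq_of_bar h3 hn (Or.inl h)]
    · rw [hC.strLen_f_eq_of_bar h3 hn (Or.inl h)]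
  · refine prodOp_bind_comm (fun b => (hBcomm b).2.1) (fun c => (hCcomm c).2.1)
      (fun b b' c h => ?_) (fun b c c' h => ?_)
      (fun _ _ _ h => hB.wt_zero_iff_of_e_or_f h3 hn (.inr h)) (fun _ _ _ _ => Iff.rfl) x
    · rw [hB.strLen_e_eq_of_bar h3 hn (Or.inl h)]
    · rw [hC.strLen_f_eq_of_bar h3 hn (Or.inl h)]
  · refine prodOp_bind_comm (fun b => (hBcomm b).2.2.1) (fun c => (hCcomm c).2.2.1)
      (fun b b' c h => ?_) (fun b c c' h => ?_)
      (fun _ _ _ h => hB.wt_zero_iff_of_e_or_f h3 hn (.inl h)) (fun _ _ _ _ => Iff.rfl) x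
    · rw [hB.strLen_e_eq_of_bar h3 hn (Or.inr h)]
    · rw [hC.strLen_f_eq_of_bar h3 hn (Or.inr h)]
  · refine prodOp_bind_comm (fun b => (hBcomm b).2.2.2) (fun c => (hCcomm c).2.2.2)
      (fun b b' c h => ?_) (fun b c c' h => ?_)
      (fun _ _ _ h => hB.wt_zero_iff_of_e_or_f h3 hn (.inr h)) (fun _ _ _ _ => Iff.rfl) x
    · rw [hB.strLen_e_eq_of_bar h3 hn (Or.inr h)]
    · rw [hC.strLen_f_eq_of_bar h3 hn (Or.inr h)]

theorem tensorQ_sameStringLens (hB : IsSqQnCrystal n DB) (hC : IsSqQnCrystal n DC) (h3 : 3 ≤ i)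
    (hn : i < n) {x y : B × C}
    (h : (tensorQ DB DC).ebar x = some y ∨ (tensorQ DB DC).fbar x = some y) :
    (tensorQ DB DC).SameStringLens i x y := by
  obtain ⟨b, c⟩ := x
  obtain ⟨b', c'⟩ := y
  rw [tensorQ_ebar_eq, tensorQ_fbar_eq, prodOp_eq_some_iff, prodOp_eq_some_iff] at h
  have h1 : 1 ≤ i := by omega
  rcases h with (⟨-, hc, rfl⟩ | ⟨-, hb, rfl⟩) | (⟨-, hc, rfl⟩ | ⟨-, hb, rfl⟩)
  · exact hB.1.sameStringLens_tensorGl hC.1 h1 hn (.refl _ _ _) (hC.2.2.1 i h3 hn _ _ (.inl hc))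
  · exact hB.1.sameStringLens_tensorGl hC.1 h1 hn (hB.2.2.1 i h3 hn _ _ (.inl hb)) (.refl _ _ _)
  · exact hB.1.sameStringLens_tensorGl hC.1 h1 hn (.refl _ _ _) (hC.2.2.1 i h3 hn _ _ (.inr hc))
  · exact hB.1.sameStringLens_tensorGl hC.1 h1 hn (hB.2.2.1 i h3 hn _ _ (.inr hb)) (.refl _ _ _)

theorem exists_tensorQ_bar_stringLens (hB : IsSqQnCrystal n DB) (hC : IsSqQnCrystal n DC)
    (x : B × C) :
    ∃ ep ph : ℕ, HasStringLen (tensorQ DB DC).ebar x ep ∧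
      HasStringLen (tensorQ DB DC).fbar x ph ∧
      ep + ph = if (tensorQ DB DC).wt x 1 = 0 ∧ (tensorQ DB DC).wt x 2 = 0 then 0 else 2 := by
  obtain ⟨b, c⟩ := x
  rw [tensorQ_ebar_eq, tensorQ_fbar_eq]
  by_cases hP : DB.wt b 1 = 0 ∧ DB.wt b 2 = 0
  · obtain ⟨ep, ph, hep, hph, hsum⟩ := hC.2.2.2.1 c
    refine ⟨ep, ph, hasStringLen_prodOp_right hP (fun _ _ _ => id) hep,
      hasStringLen_prodOp_right hP (fun _ _ _ => id) hph, ?_⟩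
    simpa [tensorQ_wt, hP.1, hP.2] using hsum
  · obtain ⟨ep, ph, hep, hph, hsum⟩ := hB.2.2.2.1 b
    refine ⟨ep, ph,
      hasStringLen_prodOp_left hP (fun _ _ h _ => (hB.not_wt_eq_zero_of_ebar_eq_some h).2) hep,
      hasStringLen_prodOp_left hP (fun _ _ h _ => (hB.not_wt_eq_zero_of_fbar_eq_some h).2) hph, ?_⟩
    rw [if_neg hP] at hsum
    rw [if_neg (by rw [tensorQ_wt, tensorQ_wt]; omega), hsum]

theorem tensorQ_ebar_eq_some_iff (hB : IsSqQnCrystal n DB) (hC : IsSqQnCrystal n DC)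
    (x y : B × C) : (tensorQ DB DC).ebar x = some y ↔ (tensorQ DB DC).fbar y = some x := by
  rw [tensorQ_ebar_eq, tensorQ_fbar_eq]
  refine prodOp_adjoint hB.2.2.2.2.1 hC.2.2.2.2.1 (fun b b' c h => ?_) (fun _ _ _ _ => ?_) x y
  · obtain ⟨hb, hb'⟩ := hB.not_wt_eq_zero_of_ebar_eq_some h
    exact iff_of_false hb hb'
  · rfl

theorem tensorQ_wt_sub (hB : IsSqQnCrystal n DB) (hC : IsSqQnCrystal n DC) {x y : B × C}
    (h : (tensorQ DB DC).ebar x = some y) {ep : ℕ}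
    (hep : HasStringLen (tensorQ DB DC).ebar x ep) (k : ℕ) :
    ((tensorQ DB DC).wt y k : ℤ) - (tensorQ DB DC).wt x k =
      if ep = 2 then (if k = 1 then 1 else 0) else (if k = 2 then -1 else 0) := by
  obtain ⟨b, c⟩ := x
  obtain ⟨b', c'⟩ := y
  rw [tensorQ_ebar_eq] at h hep
  rw [prodOp_eq_some_iff] at h
  rw [tensorQ_wt, tensorQ_wt]
  push_cast
  rcases h with ⟨hP, hc, rfl⟩ | ⟨hP, hb, rfl⟩
  · obtain ⟨e, _, he, -⟩ := hC.2.2.2.1 c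
    rw [hep.unique (hasStringLen_prodOp_right hP (fun _ _ _ => id) he),
      ← hC.2.2.2.2.2 c c' hc e he k]
    ring
  · obtain ⟨e, _, he, -⟩ := hB.2.2.2.1 b
    rw [hep.unique (hasStringLen_prodOp_left hP
        (fun _ _ h _ => (hB.not_wt_eq_zero_of_ebar_eq_some h).2) he),
      ← hB.2.2.2.2.2 b b' hb e he k]
    ring

end IsSqQnCrystal

/-- Theorem 3.14 of the paper, `√q_n` part: the tensor product of
two `√q_n`-crystals, with the queer operators acting on the right factor exactly when
the first two weight coordinates of the left factor vanish, is again a `√q_n`-crystal. -/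
theorem stmt17 {B C : Type*} (n : ℕ) (DB : SqQData B) (DC : SqQData C)
    (hB : IsSqQnCrystal n DB) (hC : IsSqQnCrystal n DC) :
    IsSqQnCrystal n (tensorQ DB DC) :=
  ⟨isSqGlCrystal_tensorGl hB.1 hC.1, fun _ h3 hn x => hB.tensorQ_bind_comm hC h3 hn x,
    fun _ h3 hn _ _ h => hB.tensorQ_sameStringLens hC h3 hn h,
    hB.exists_tensorQ_bar_stringLens hC, hB.tensorQ_ebar_eq_some_iff hC,
    fun _ _ h _ hep k => hB.tensorQ_wt_sub hC h hep k⟩
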